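/- Let $T$ be a triangle with edges $e_1, e_2, e_3$. A vector field $\bm{v}$ on $T$ satisfying $\nabla\cdot\bm{v}$ constant, $\nabla\times\bm{v} = 0$, and $\bm{v}\cdot\bm{n}_{e_i}$ constant on each edge $e_i$ is necessarily of Raviart–Thomas type: $\bm{v}(x) = \bm{a} + c\, x$ for some constant vector $\bm{a} \in \mathbb{R}^2$ and scalar $c \in \mathbb{R}$. In particular the local lowest-order virtual element space on a triangle coincides with $\mathbb{RT}_0(T)$ and has dimension 3. -/

import Mathlib

open Set

noncomputable section
def RTq : ℂ →L[ℝ] ℝ × ℝ := Complex.reCLM.prod Complex.imCLM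
def RTm : (ℝ × ℝ) →L[ℝ] ℂ :=
  (Complex.ofRealCLM.comp (ContinuousLinearMap.fst ℝ ℝ ℝ)) -
    (ContinuousLinearMap.snd ℝ ℝ ℝ).smulRight Complex.I

@[simp] lemma RTq_apply (z : ℂ) : RTq z = (z.re, z.im) := rfl
@[simp] lemma RTm_apply (y : ℝ × ℝ) : RTm y = (y.1 : ℂ) - (y.2 : ℝ) • Complex.I := rfl

def RTmu (v : ℝ × ℝ → ℝ × ℝ) (c : ℝ) (x : ℝ × ℝ) : ℂ :=
  ((fderiv ℝ v x (1,0)).1 - c : ℝ) - ((fderiv ℝ v x (1,0)).2 : ℝ) • Complex.I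

def RTf (v : ℝ × ℝ → ℝ × ℝ) (c : ℝ) : ℂ → ℂ := fun z => RTm (v (RTq z) - c • RTq z)

lemma RT_ext (L₁ L₂ : ℂ →L[ℝ] ℂ) (h1 : L₁ 1 = L₂ 1) (hI : L₁ Complex.I = L₂ Complex.I) :
    L₁ = L₂ := by
  ext τ
  have hτ : τ = τ.re • (1:ℂ) + τ.im • Complex.I := by
    simp [Complex.real_smul]
  rw [hτ]
  simp only [map_add, map_smul, h1, hI]

lemma RTf_hasFDerivAt (v : ℝ × ℝ → ℝ × ℝ) (hv : Differentiable ℝ v) (c : ℝ) (z : ℂ) :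
    HasFDerivAt (RTf v c)
      (RTm.comp ((fderiv ℝ v (RTq z)).comp RTq - c • RTq)) z := by
  have h1 : HasFDerivAt (fun z : ℂ => RTq z) (RTq : ℂ →L[ℝ] ℝ × ℝ) z := RTq.hasFDerivAt
  have h2 : HasFDerivAt v (fderiv ℝ v (RTq z)) (RTq z) := (hv (RTq z)).hasFDerivAt
  have h3 : HasFDerivAt (fun z : ℂ => v (RTq z)) ((fderiv ℝ v (RTq z)).comp RTq) z :=
    h2.comp z h1
  have h4 : HasFDerivAt (fun z : ℂ => c • RTq z) (c • (RTq : ℂ →L[ℝ] ℝ × ℝ)) z :=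
    h1.const_smul c
  have h5 := h3.sub h4
  exact RTm.hasFDerivAt.comp z h5

lemma RTf_hasDerivAt (v : ℝ × ℝ → ℝ × ℝ) (hv : Differentiable ℝ v) (c : ℝ) (z : ℂ)
    (hdivz : (fderiv ℝ v (RTq z) (1,0)).1 + (fderiv ℝ v (RTq z) (0,1)).2 = 2 * c)
    (hcurlz : (fderiv ℝ v (RTq z) (1,0)).2 - (fderiv ℝ v (RTq z) (0,1)).1 = 0) :
    HasDerivAt (RTf v c) (RTmu v c (RTq z)) z := by
  rw [hasDerivAt_iff_hasFDerivAt]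
  refine hasFDerivAt_of_restrictScalars ℝ (RTf_hasFDerivAt v hv c z) ?_
  refine RT_ext _ _ ?_ ?_ <;>
    simp only [ContinuousLinearMap.coe_restrictScalars', ContinuousLinearMap.smulRight_apply,
      ContinuousLinearMap.one_apply, ContinuousLinearMap.coe_comp', Function.comp_apply,
      ContinuousLinearMap.sub_apply, ContinuousLinearMap.coe_smul', Pi.smul_apply,
      RTq_apply, RTm_apply, RTmu, Complex.real_smul, Complex.one_re, Complex.one_im,
      Complex.I_re, Complex.I_im, Prod.smul_mk, smul_eq_mul, mul_one, mul_zero,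
      Prod.mk_sub_mk, one_smul, ContinuousLinearMap.toSpanSingleton_apply]
  · have h1 : ((fderiv ℝ v (z.re, z.im)) ((1:ℝ), (0:ℝ)) - ((c:ℝ), (0:ℝ))).1
        = ((fderiv ℝ v (z.re, z.im)) ((1:ℝ), (0:ℝ))).1 - c := rfl
    have h2 : ((fderiv ℝ v (z.re, z.im)) ((1:ℝ), (0:ℝ)) - ((c:ℝ), (0:ℝ))).2
        = ((fderiv ℝ v (z.re, z.im)) ((1:ℝ), (0:ℝ))).2 - 0 := rfl
    rw [h1, h2]
    push_cast
    ring
  · have h1 : ((fderiv ℝ v (z.re, z.im)) ((0:ℝ), (1:ℝ)) - ((0:ℝ), (c:ℝ))).1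
        = ((fderiv ℝ v (z.re, z.im)) ((0:ℝ), (1:ℝ))).1 - 0 := rfl
    have h2 : ((fderiv ℝ v (z.re, z.im)) ((0:ℝ), (1:ℝ)) - ((0:ℝ), (c:ℝ))).2
        = ((fderiv ℝ v (z.re, z.im)) ((0:ℝ), (1:ℝ))).2 - c := rfl
    rw [h1, h2]
    have hq : (fderiv ℝ v (z.re, z.im)) ((0:ℝ), (1:ℝ))
        = (fderiv ℝ v (RTq z)) ((0:ℝ), (1:ℝ)) := rfl
    simp only [RTq_apply] at hdivz hcurlz
    apply Complex.ext <;>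
      simp [Complex.smul_re, Complex.smul_im] <;> linarith

end

lemma RT_edge_im (v : ℝ × ℝ → ℝ × ℝ) (hv : Differentiable ℝ v) (c : ℝ)
    (aPt tv n : ℝ × ℝ) (hn : n ≠ 0) (hperp : n.1 * tv.1 + n.2 * tv.2 = 0) (g : ℝ)
    (hconst : ∀ t ∈ Icc (0:ℝ) 1,
      (v (aPt + t • tv)).1 * n.1 + (v (aPt + t • tv)).2 * n.2 = g)
    (t : ℝ) (ht : t ∈ Ioo (0:ℝ) 1)
    (hdivx : (fderiv ℝ v (aPt + t • tv) (1,0)).1 + (fderiv ℝ v (aPt + t • tv) (0,1)).2 = 2*c)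
    (hcurlx : (fderiv ℝ v (aPt + t • tv) (1,0)).2 - (fderiv ℝ v (aPt + t • tv) (0,1)).1 = 0) :
    (RTmu v c (aPt + t • tv) * ((tv.1 : ℂ) + (tv.2 : ℂ) * Complex.I)^2).im = 0 := by
  by_cases htv : tv = 0
  · simp [htv]
  set x := aPt + t • tv with hx
  set A := fderiv ℝ v x with hA
  -- derivative of the normal component along the edge vanishes
  have hγ : HasDerivAt (fun s : ℝ => aPt + s • tv) tv t := by
    simpa using ((hasDerivAt_id t).smul_const tv).const_add aPt
  have hvg : HasDerivAt (fun s : ℝ => v (aPt + s • tv)) (A tv) t :=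
    (hv x).hasFDerivAt.comp_hasDerivAt t hγ
  have h1 : HasDerivAt (fun s : ℝ => (v (aPt + s • tv)).1) (A tv).1 t :=
    (ContinuousLinearMap.fst ℝ ℝ ℝ).hasFDerivAt.comp_hasDerivAt t hvg
  have h2 : HasDerivAt (fun s : ℝ => (v (aPt + s • tv)).2) (A tv).2 t :=
    (ContinuousLinearMap.snd ℝ ℝ ℝ).hasFDerivAt.comp_hasDerivAt t hvg
  have hψ : HasDerivAt (fun s : ℝ =>
      (v (aPt + s • tv)).1 * n.1 + (v (aPt + s • tv)).2 * n.2)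
      ((A tv).1 * n.1 + (A tv).2 * n.2) t := (h1.mul_const n.1).add (h2.mul_const n.2)
  have hev : (fun s : ℝ =>
      (v (aPt + s • tv)).1 * n.1 + (v (aPt + s • tv)).2 * n.2) =ᶠ[nhds t]
      fun _ => g := by
    filter_upwards [Ioo_mem_nhds ht.1 ht.2] with s hs
    exact hconst s ⟨hs.1.le, hs.2.le⟩
  have hzero : HasDerivAt (fun s : ℝ =>
      (v (aPt + s • tv)).1 * n.1 + (v (aPt + s • tv)).2 * n.2) 0 t :=
    (hasDerivAt_const t g).congr_of_eventuallyEq hev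
  have hd0 : (A tv).1 * n.1 + (A tv).2 * n.2 = 0 := hψ.unique hzero
  -- decompose A tv
  have htv' : tv = tv.1 • ((1:ℝ), (0:ℝ)) + tv.2 • ((0:ℝ), (1:ℝ)) := by
    ext <;> simp
  have hAtv : A tv = tv.1 • A ((1:ℝ), (0:ℝ)) + tv.2 • A ((0:ℝ), (1:ℝ)) := by
    conv_lhs => rw [htv']
    rw [map_add, map_smul, map_smul]
  -- the normal is a rotation of the tangent
  obtain ⟨s, hs0, hn1, hn2⟩ : ∃ s : ℝ, s ≠ 0 ∧ n.1 = -(s * tv.2) ∧ n.2 = s * tv.1 := by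
    rcases eq_or_ne tv.1 0 with h10 | h10
    · have h20 : tv.2 ≠ 0 := by
        intro h
        exact htv (Prod.ext h10 h)
      have hn2' : n.2 = 0 := by
        have : n.2 * tv.2 = 0 := by rw [h10] at hperp; linarith
        exact (mul_eq_zero.mp this).resolve_right h20
      have hn1' : n.1 ≠ 0 := by
        intro h
        exact hn (Prod.ext h hn2')
      exact ⟨-n.1 / tv.2, by simp [div_eq_zero_iff, hn1', h20], by field_simp,
        by simp [h10, hn2']⟩
    · refine ⟨n.2 / tv.1, ?_, ?_, by field_simp⟩
      · intro h
        have hn2' : n.2 = 0 := ((div_eq_zero_iff.mp h).resolve_right h10)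
        have hn1' : n.1 = 0 := by
          have : n.1 * tv.1 = 0 := by rw [hn2'] at hperp; linarith
          exact (mul_eq_zero.mp this).resolve_right h10
        exact hn (Prod.ext hn1' hn2')
      · field_simp
        nlinarith [hperp]
  -- final algebra
  set P := (A ((1:ℝ), (0:ℝ))).1 with hP
  set Q := (A ((1:ℝ), (0:ℝ))).2 with hQ
  set R := (A ((0:ℝ), (1:ℝ))).1 with hR
  set S := (A ((0:ℝ), (1:ℝ))).2 with hS
  have hAtv1 : (A tv).1 = tv.1 * P + tv.2 * R := by rw [hAtv]; simp [hP, hR]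
  have hAtv2 : (A tv).2 = tv.1 * Q + tv.2 * S := by rw [hAtv]; simp [hQ, hS]
  rw [hAtv1, hAtv2, hn1, hn2] at hd0
  have hcurl' : Q = R := by linarith [hcurlx]
  have hdiv' : P + S = 2 * c := hdivx
  have key : tv.1^2 * Q - tv.2^2 * Q + 2 * tv.1 * tv.2 * (c - P) = 0 := by
    have hfac : s * (tv.1^2 * Q - tv.2^2 * Q + 2 * tv.1 * tv.2 * (c - P)) = 0 := by
      have hS' : S = 2 * c - P := by linarith
      rw [← hcurl', hS'] at hd0
      ring_nf
      ring_nf at hd0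
      linarith
    exact (mul_eq_zero.mp hfac).resolve_left hs0
  have hτ2 : ((tv.1 : ℂ) + (tv.2 : ℂ) * Complex.I)^2
      = ((tv.1^2 - tv.2^2 : ℝ) : ℂ) + ((2*tv.1*tv.2 : ℝ) : ℂ) * Complex.I := by
    have hI2 : (Complex.I)^2 = -1 := Complex.I_sq
    push_cast
    ring_nf
    rw [hI2]
    ring
  have him : (RTmu v c x * ((tv.1 : ℂ) + (tv.2 : ℂ) * Complex.I)^2).im
      = -(tv.1^2 * Q - tv.2^2 * Q + 2 * tv.1 * tv.2 * (c - P)) := by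
    rw [RTmu, hτ2]
    rw [Complex.real_smul]
    simp only [← hA, ← hP, ← hQ, Complex.mul_im, Complex.sub_im, Complex.add_im,
      Complex.ofReal_im, Complex.ofReal_re, Complex.mul_re, Complex.I_re, Complex.I_im,
      Complex.sub_re, Complex.add_re]
    ring
  rw [him, key, neg_zero]

noncomputable def RTc (y : ℝ × ℝ) : ℂ := (y.1 : ℂ) + (y.2 : ℂ) * Complex.I
@[simp] lemma RTc_re (y : ℝ × ℝ) : (RTc y).re = y.1 := by simp [RTc]
@[simp] lemma RTc_im (y : ℝ × ℝ) : (RTc y).im = y.2 := by simp [RTc]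

lemma RTc_eq_zero {y : ℝ × ℝ} (h : RTc y = 0) : y = 0 := by
  have h1 : y.1 = 0 := by rw [← RTc_re y, h]; simp
  have h2 : y.2 = 0 := by rw [← RTc_im y, h]; simp
  exact Prod.ext h1 h2

lemma RT_const_zero (p : Fin 3 → ℝ × ℝ) (hp : AffineIndependent ℝ p) (k : ℂ)
    (h : ∀ i : Fin 3, (k * (RTc (p (i + 1) - p i))^2).im = 0) : k = 0 := by
  by_contra hk
  set t0 := RTc (p 1 - p 0) with ht0
  set t1 := RTc (p 2 - p 1) with ht1
  set t2 := RTc (p 0 - p 2) with ht2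
  have h0 : (k * t0^2).im = 0 := by have := h 0; rwa [show ((0:Fin 3)+1) = 1 from rfl] at this
  have h1 : (k * t1^2).im = 0 := by have := h 1; rwa [show ((1:Fin 3)+1) = 2 from rfl] at this
  have h2 : (k * t2^2).im = 0 := by have := h 2; rwa [show ((2:Fin 3)+1) = 0 from rfl] at this
  have hsum : t0 + t1 + t2 = 0 := by
    rw [ht0, ht1, ht2]
    simp only [RTc, Prod.fst_sub, Prod.snd_sub]
    push_cast
    ring
  have hprod : (k * (t0 * t1)).im = 0 := by
    have e : k * t2^2 = k*t0^2 + k*t1^2 + 2*(k*(t0*t1)) := by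
      rw [show t2 = -(t0 + t1) by linear_combination hsum]
      ring
    have h2' := h2
    rw [e] at h2'
    simp only [Complex.add_im] at h2'
    have h2im : (2 * (k * (t0 * t1))).im = 2 * (k * (t0*t1)).im := by
      simp [Complex.mul_im]
    rw [h2im] at h2'
    linarith
  -- t0 ≠ 0
  have hne : p 1 ≠ p 0 := hp.injective.ne (by decide)
  have ht0ne : t0 ≠ 0 := by
    intro hz
    exact hne (by have := RTc_eq_zero (ht0 ▸ hz); exact sub_eq_zero.mp this)
  -- real forms
  set r0 := (k * t0^2).re with hr0
  set r := (k * (t0 * t1)).re with hr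
  have keq0 : k * t0^2 = (r0 : ℂ) := Complex.ext (by simp [hr0]) (by simp [h0])
  have keq1 : k * (t0 * t1) = (r : ℂ) := Complex.ext (by simp [hr]) (by simp [hprod])
  have hr0ne : r0 ≠ 0 := by
    intro hz
    apply hk
    have : k * t0^2 = 0 := by rw [keq0, hz]; simp
    rcases mul_eq_zero.mp this with h' | h'
    · exact h'
    · exact absurd (pow_eq_zero_iff (n := 2) (by norm_num) |>.mp h') ht0ne
  have hlin : t1 * (k * t0^2) = (k * (t0 * t1)) * t0 := by ring
  rw [keq0, keq1] at hlin
  set lam := r / r0 with hlam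
  have hr0c : ((r0 : ℝ) : ℂ) ≠ 0 := Complex.ofReal_ne_zero.mpr hr0ne
  have ht1eq : t1 = ((lam : ℝ) : ℂ) * t0 := by
    rw [hlam]
    push_cast
    rw [div_mul_eq_mul_div, eq_div_iff hr0c]
    linear_combination hlin
  -- back to ℝ × ℝ
  have hco : p 2 - p 1 = lam • (p 1 - p 0) := by
    have hre : (p 2 - p 1).1 = lam * (p 1 - p 0).1 := by
      have := congrArg Complex.re ht1eq
      rw [ht1, ht0] at this
      simpa [Complex.mul_re] using this
    have him : (p 2 - p 1).2 = lam * (p 1 - p 0).2 := by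
      have := congrArg Complex.im ht1eq
      rw [ht1, ht0] at this
      simpa [Complex.mul_im] using this
    ext
    · simpa using hre
    · simpa using him
  -- contradiction with affine independence
  have := affineIndependent_iff.mp hp Finset.univ ![lam, -1-lam, 1]
    (by rw [Fin.sum_univ_three]
        simp only [Matrix.cons_val_zero, Matrix.cons_val_one, Matrix.head_cons,
          Matrix.cons_val_two, Matrix.tail_cons]
        ring) ?_ 2 (Finset.mem_univ _)
  · simp at this
  · rw [Fin.sum_univ_three]
    simp only [Matrix.cons_val_zero, Matrix.cons_val_one, Matrix.head_cons,
      Matrix.cons_val_two, Matrix.tail_cons]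
    have : lam • p 0 + (-1-lam) • p 1 + (1:ℝ) • p 2
        = (p 2 - p 1) - lam • (p 1 - p 0) := by
      simp [smul_sub, sub_smul, one_smul]
      abel
    rw [this, hco]
    simp

lemma RT_dense (T : Set (ℝ × ℝ)) (hconv : Convex ℝ T) (z : ℂ) (hz : RTq z ∈ T)
    (w₀ : ℂ) (hw₀ : RTq w₀ ∈ interior T) : z ∈ closure (RTq ⁻¹' interior T) := by
  have h1 : Filter.Tendsto (fun n : ℕ => (1 / (n + 1) : ℝ)) Filter.atTop (nhds 0) :=
    tendsto_one_div_add_atTop_nhds_zero_nat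
  have h2 : Filter.Tendsto (fun n : ℕ => z + (1 / (n + 1) : ℝ) • (w₀ - z))
      Filter.atTop (nhds z) := by
    have := (h1.smul_const (w₀ - z)).const_add z
    simpa using this
  refine mem_closure_of_tendsto h2 (Filter.Eventually.of_forall fun n => ?_)
  have hpos : (0 : ℝ) < 1 / (n + 1) := by positivity
  have hle : (1 / (n + 1) : ℝ) ≤ 1 := by
    rw [div_le_one (by positivity)]
    linarith [Nat.cast_nonneg (α := ℝ) n]
  have : RTq (z + (1 / (n + 1) : ℝ) • (w₀ - z))
      = RTq z + (1 / (n + 1) : ℝ) • (RTq w₀ - RTq z) := by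
    rw [map_add, map_smul, map_sub]
  simp only [mem_preimage, this]
  exact hconv.add_smul_sub_mem_interior hz hw₀ ⟨hpos, hle⟩

lemma RT_off_lines (U : Set ℂ) (hU : IsOpen U) (hne : U.Nonempty) (l : Fin 3 → ℂ)
    (hl : ∀ i, l i ≠ 0) : ∃ z ∈ U, ∀ i, (z * l i).im ≠ 0 := by
  by_contra hcon
  push_neg at hcon
  have hsub : U ⊆ ({z | (z * l 0).im = 0} ∪ {z | (z * l 1).im = 0}) ∪ {z | (z * l 2).im = 0} := by
    intro z hz
    obtain ⟨i, hi⟩ := hcon z hz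
    fin_cases i
    · exact Or.inl (Or.inl hi)
    · exact Or.inl (Or.inr hi)
    · exact Or.inr hi
  have hclosed : ∀ w : ℂ, IsClosed {z : ℂ | (z * w).im = 0} := by
    intro w
    exact isClosed_eq (Complex.continuous_im.comp (continuous_id.mul continuous_const))
      continuous_const
  have hintr : ∀ w : ℂ, w ≠ 0 → interior {z : ℂ | (z * w).im = 0} = ∅ := by
    intro w hw
    rw [eq_empty_iff_forall_notMem]
    intro z hz
    rw [mem_interior_iff_mem_nhds, Metric.mem_nhds_iff] at hz
    obtain ⟨ε, hε, hball⟩ := hz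
    set dir := Complex.I * (starRingEnd ℂ) w with hdir
    have hdirn : ‖dir‖ = ‖w‖ := by
      simp [hdir]
    set δ := ε / (‖w‖ + 1) with hδ
    have hwpos : (0:ℝ) < ‖w‖ := norm_pos_iff.mpr hw
    have hδpos : 0 < δ := by positivity
    have hmem : z + δ • dir ∈ Metric.ball z ε := by
      rw [Metric.mem_ball, dist_eq_norm]
      simp only [add_sub_cancel_left]
      rw [norm_smul, hdirn]
      simp only [Real.norm_eq_abs, abs_of_pos hδpos]
      rw [hδ, div_mul_eq_mul_div, div_lt_iff₀ (by positivity)]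
      nlinarith
    have hz' := hball hmem
    simp only [mem_setOf_eq, add_mul, Complex.add_im] at hz'
    have hz0 : (z * w).im = 0 := hball (Metric.mem_ball_self hε)
    rw [hz0] at hz'
    have : ((δ • dir) * w).im = δ * Complex.normSq w := by
      rw [hdir]
      rw [smul_mul_assoc]
      rw [Complex.smul_im]
      congr 1
      rw [mul_assoc, mul_comm ((starRingEnd ℂ) w) w, Complex.mul_conj]
      simp
    rw [this] at hz'
    have : δ * Complex.normSq w ≠ 0 := by
      apply mul_ne_zero hδpos.ne'
      simpa [Complex.normSq_eq_zero] using hw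
    exact this (by linarith)
  have hiu : interior (({z : ℂ | (z * l 0).im = 0} ∪ {z : ℂ | (z * l 1).im = 0})
      ∪ {z : ℂ | (z * l 2).im = 0}) = ∅ := by
    rw [interior_union_isClosed_of_interior_empty ((hclosed (l 0)).union (hclosed (l 1)))
      (hintr (l 2) (hl 2))]
    rw [interior_union_isClosed_of_interior_empty (hclosed (l 0)) (hintr (l 1) (hl 1))]
    exact hintr (l 0) (hl 0)
  obtain ⟨z, hz⟩ := hne
  have := interior_maximal hsub hU
  rw [hiu] at this
  exact absurd (this hz) (notMem_empty z)

lemma RT_ray_frontier (U : Set ℂ) (hU : IsOpen U) (C : ℝ) (hC : ∀ y ∈ U, ‖y‖ ≤ C)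
    (z₀ : ℂ) (hz₀ : z₀ ∈ U) (hz₀ne : z₀ ≠ 0) :
    ∃ t : ℝ, 0 < t ∧ t • z₀ ∈ frontier U := by
  by_contra hfr
  push_neg at hfr
  set R : Set ℂ := (fun t : ℝ => t • z₀) '' Ici 1 with hR
  have hRconn : IsPreconnected R :=
    isPreconnected_Ici.image _ ((continuous_id.smul continuous_const).continuousOn)
  have h1R : z₀ ∈ R := ⟨1, mem_Ici.mpr le_rfl, one_smul ℝ z₀⟩
  have hz₀pos : 0 < ‖z₀‖ := norm_pos_iff.mpr hz₀ne
  set t₁ := max 1 ((C + 1) / ‖z₀‖) with ht₁def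
  have ht₁1 : (1:ℝ) ≤ t₁ := le_max_left _ _
  have ht₁U : t₁ • z₀ ∉ U := by
    intro h
    have hn := hC _ h
    rw [norm_smul, Real.norm_eq_abs, abs_of_pos (by linarith)] at hn
    have : (C + 1) / ‖z₀‖ * ‖z₀‖ ≤ t₁ * ‖z₀‖ :=
      mul_le_mul_of_nonneg_right (le_max_right _ _) hz₀pos.le
    rw [div_mul_cancel₀ _ hz₀pos.ne'] at this
    linarith
  have hcover : R ⊆ U ∪ (closure U)ᶜ := by
    rintro y ⟨t, ht, rfl⟩
    rw [mem_Ici] at ht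
    by_cases hyU : t • z₀ ∈ U
    · exact Or.inl hyU
    · refine Or.inr ?_
      intro hycl
      have : t • z₀ ∈ frontier U := by
        rw [hU.frontier_eq]
        exact ⟨hycl, hyU⟩
      exact hfr t (by linarith) this
  have ht₁mem : t₁ • z₀ ∈ R ∩ (closure U)ᶜ := by
    refine ⟨⟨t₁, ht₁1, rfl⟩, ?_⟩
    intro hycl
    have : t₁ • z₀ ∈ frontier U := by
      rw [hU.frontier_eq]
      exact ⟨hycl, ht₁U⟩
    exact hfr t₁ (by linarith) this
  have := hRconn U (closure U)ᶜ hU isClosed_closure.isOpen_compl hcover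
    ⟨z₀, h1R, hz₀⟩ ⟨t₁ • z₀, ht₁mem.1, ht₁mem.2⟩
  obtain ⟨y, _, hyU, hyc⟩ := this
  exact hyc (subset_closure hyU)

lemma RT_boundary (p : Fin 3 → ℝ × ℝ) (hp : AffineIndependent ℝ p)
    (x : ℝ × ℝ) (hx : x ∈ convexHull ℝ (range p))
    (hxi : x ∉ interior (convexHull ℝ (range p))) :
    ∃ i : Fin 3, x ∈ segment ℝ (p i) (p (i + 1)) := by
  have hfr : Module.finrank ℝ (ℝ × ℝ) = 2 := by
    simp [Module.finrank_prod]
  have htot : affineSpan ℝ (range p) = ⊤ := by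
    rw [hp.affineSpan_eq_top_iff_card_eq_finrank_add_one]
    simp [hfr]
  let b : AffineBasis (Fin 3) ℝ (ℝ × ℝ) := ⟨p, hp, htot⟩
  have hb : ⇑b = p := rfl
  have hx' : ∀ i, 0 ≤ b.coord i x := by
    have := b.convexHull_eq_nonneg_coord
    rw [hb] at this
    rw [this] at hx
    exact hx
  have hxi' : ¬ ∀ i, 0 < b.coord i x := by
    intro h
    apply hxi
    have := b.interior_convexHull
    rw [hb] at this
    rw [this]
    exact h
  push_neg at hxi'
  obtain ⟨i, hi⟩ := hxi'
  have hiz : b.coord i x = 0 := le_antisymm hi (hx' i)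
  have hsum : ∑ j, b.coord j x = 1 := b.sum_coord_apply_eq_one x
  have hcomb : ∑ j, b.coord j x • p j = x := by
    have := b.linear_combination_coord_eq_self x
    rwa [hb] at this
  rw [Fin.sum_univ_three] at hsum hcomb
  set w0 := b.coord 0 x
  set w1 := b.coord 1 x
  set w2 := b.coord 2 x
  fin_cases i
  · replace hiz : w0 = 0 := hiz
    refine ⟨1, ?_⟩
    have h21 : ((1 : Fin 3) + 1) = 2 := rfl
    rw [h21]
    refine ⟨w1, w2, hx' 1, hx' 2, by linarith, ?_⟩
    rw [show w1 • p 1 + w2 • p 2 = w0 • p 0 + w1 • p 1 + w2 • p 2 by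
      rw [hiz]; simp]
    exact hcomb
  · replace hiz : w1 = 0 := hiz
    refine ⟨2, ?_⟩
    have h21 : ((2 : Fin 3) + 1) = 0 := rfl
    rw [h21]
    refine ⟨w2, w0, hx' 2, hx' 0, by linarith, ?_⟩
    rw [show w2 • p 2 + w0 • p 0 = w0 • p 0 + w1 • p 1 + w2 • p 2 by
      rw [hiz]; simp; abel]
    exact hcomb
  · replace hiz : w2 = 0 := hiz
    refine ⟨0, ?_⟩
    have h21 : ((0 : Fin 3) + 1) = 1 := rfl
    rw [h21]
    refine ⟨w0, w1, hx' 0, hx' 1, by linarith, ?_⟩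
    rw [show w0 • p 0 + w1 • p 1 = w0 • p 0 + w1 • p 1 + w2 • p 2 by
      rw [hiz]; simp]
    exact hcomb

lemma RT_finrank : Module.finrank ℝ ↥(Submodule.span ℝ
    ({fun x => x, fun _ => ((1 : ℝ), (0 : ℝ)), fun _ => ((0 : ℝ), (1 : ℝ))} :
      Set ((ℝ × ℝ) → ℝ × ℝ))) = 3 := by
  have hb : Set.range ![(fun x => x : (ℝ×ℝ) → ℝ×ℝ), fun _ => ((1:ℝ),(0:ℝ)),
      fun _ => ((0:ℝ),(1:ℝ))] =
      ({fun x => x, fun _ => ((1 : ℝ), (0 : ℝ)), fun _ => ((0 : ℝ), (1 : ℝ))} :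
        Set ((ℝ × ℝ) → ℝ × ℝ)) := by
    ext f
    simp [Fin.exists_fin_succ, Matrix.range_cons, Matrix.range_empty]
    tauto
  have hli : LinearIndependent ℝ ![(fun x => x : (ℝ×ℝ) → ℝ×ℝ), fun _ => ((1:ℝ),(0:ℝ)),
      fun _ => ((0:ℝ),(1:ℝ))] := by
    rw [Fintype.linearIndependent_iff]
    intro g hg
    have h00 := congrFun hg ((0:ℝ), (0:ℝ))
    have h10 := congrFun hg ((1:ℝ), (0:ℝ))
    have h01 := congrFun hg ((0:ℝ), (1:ℝ))
    simp only [Finset.sum_apply, Fin.sum_univ_three, Pi.smul_apply, Matrix.cons_val_zero,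
      Matrix.cons_val_one, Matrix.head_cons, Matrix.cons_val_two, Matrix.tail_cons,
      Prod.smul_mk, smul_eq_mul, mul_one, mul_zero, Pi.zero_apply, Prod.mk_add_mk,
      Prod.mk_eq_zero] at h00 h10 h01
    obtain ⟨a1, a2⟩ := h00
    obtain ⟨b1, b2⟩ := h10
    obtain ⟨c1, c2⟩ := h01
    intro i
    fin_cases i <;> simp <;> linarith
  have := finrank_span_eq_card hli
  rw [hb] at this
  rw [this]
  simp
/-- on a triangle, a smooth vector field with constant divergence,
zero curl, and constant normal component on each edge is of lowest-order
Raviart–Thomas type `v(x) = a + c x`; the space of such fields (`ℝT₀`) has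
dimension 3. -/
theorem vem_space_on_triangle_is_RT0
    (p : Fin 3 → ℝ × ℝ)
    (hp : AffineIndependent ℝ p)
    (nrm : Fin 3 → ℝ × ℝ)   -- normal to edge i, joining p i and p (i+1)
    (hnrm : ∀ i : Fin 3, nrm i ≠ 0 ∧
      (nrm i).1 * (p (i + 1) - p i).1 + (nrm i).2 * (p (i + 1) - p i).2 = 0)
    (v : ℝ × ℝ → ℝ × ℝ) (hv : ContDiff ℝ (⊤ : ℕ∞) v)
    (T : Set (ℝ × ℝ)) (hT : T = convexHull ℝ (range p))
    -- constant divergence on T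
    (hdiv : ∃ d : ℝ, ∀ x ∈ T,
      (fderiv ℝ v x (1, 0)).1 + (fderiv ℝ v x (0, 1)).2 = d)
    -- zero curl on T
    (hcurl : ∀ x ∈ T, (fderiv ℝ v x (1, 0)).2 - (fderiv ℝ v x (0, 1)).1 = 0)
    -- constant normal component on each edge
    (hnormal : ∀ i : Fin 3, ∃ g : ℝ, ∀ x ∈ segment ℝ (p i) (p (i + 1)),
      (v x).1 * (nrm i).1 + (v x).2 * (nrm i).2 = g) :
    (∃ (a : ℝ × ℝ) (c : ℝ), ∀ x ∈ T, v x = a + c • x) ∧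
    Module.finrank ℝ ↥(Submodule.span ℝ
      ({fun x => x, fun _ => ((1 : ℝ), (0 : ℝ)), fun _ => ((0 : ℝ), (1 : ℝ))} :
        Set ((ℝ × ℝ) → ℝ × ℝ))) = 3 := by
  refine ⟨?_, RT_finrank⟩
  subst hT
  set T : Set (ℝ × ℝ) := convexHull ℝ (range p) with hT
  obtain ⟨d, hdiv⟩ := hdiv
  set c := d / 2 with hc
  have hdc : d = 2 * c := by rw [hc]; ring
  -- geometry of T
  have hconv : Convex ℝ T := convex_convexHull ℝ _
  have hTcomp : IsCompact T := (finite_range p).isCompact_convexHull ℝ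
  have hfrk : Module.finrank ℝ (ℝ × ℝ) = 2 := by simp [Module.finrank_prod]
  have htot : affineSpan ℝ (range p) = ⊤ := by
    rw [hp.affineSpan_eq_top_iff_card_eq_finrank_add_one]
    simp [hfrk]
  have hint_ne : (interior T).Nonempty :=
    interior_convexHull_nonempty_iff_affineSpan_eq_top.mpr htot
  obtain ⟨x₀, hx₀⟩ := hint_ne
  have hpT : ∀ i : Fin 3, p i ∈ T := fun i => subset_convexHull ℝ _ ⟨i, rfl⟩
  have hsegT : ∀ i : Fin 3, segment ℝ (p i) (p (i + 1)) ⊆ T := fun i =>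
    hconv.segment_subset (hpT i) (hpT (i + 1))
  -- complex setup
  have hsurj : ∀ x : ℝ × ℝ, RTq ((x.1 : ℂ) + (x.2 : ℂ) * Complex.I) = x := by
    intro x
    simp [RTq_apply]
  set Ω : Set ℂ := ⇑RTq ⁻¹' interior T with hΩ
  have hΩopen : IsOpen Ω := isOpen_interior.preimage RTq.continuous
  have hΩconv : Convex ℝ Ω := by
    have := (hconv.interior).linear_preimage (RTq : ℂ →L[ℝ] ℝ × ℝ).toLinearMap
    exact this
  have hΩconn : IsPreconnected Ω := hΩconv.isPreconnected
  have hΩne : Ω.Nonempty := ⟨(x₀.1 : ℂ) + (x₀.2 : ℂ) * Complex.I, by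
    simp only [hΩ, mem_preimage, hsurj]; exact hx₀⟩
  have hvd : Differentiable ℝ v := hv.differentiable (by simp)
  set f := RTf v c with hf
  set μ : ℝ × ℝ → ℂ := RTmu v c with hμ
  have hder : ∀ z : ℂ, RTq z ∈ T → HasDerivAt f (μ (RTq z)) z := by
    intro z hz
    exact RTf_hasDerivAt v hvd c z (by rw [hdiv _ hz]; exact hdc) (hcurl _ hz)
  have hfdiff : DifferentiableOn ℂ f Ω := fun z hz =>
    ((hder z (interior_subset hz)).differentiableAt).differentiableWithinAt
  have hfana : AnalyticOnNhd ℂ f Ω := hfdiff.analyticOnNhd hΩopen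
  have hμana : AnalyticOnNhd ℂ (fun z => μ (RTq z)) Ω := by
    exact (hfana.deriv).congr hΩopen fun z hz => (hder z (interior_subset hz)).deriv
  -- continuity of μ and f
  have h2 : Continuous fun x : ℝ × ℝ => fderiv ℝ v x ((1 : ℝ), (0 : ℝ)) :=
    (hv.continuous_fderiv (by simp)).clm_apply continuous_const
  have hμcont : Continuous μ := by
    rw [hμ]
    unfold RTmu
    exact (Complex.continuous_ofReal.comp (h2.fst.sub continuous_const)).sub
      (h2.snd.smul continuous_const)
  have hfcont : Continuous f := by
    rw [hf]
    unfold RTf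
    exact RTm.continuous.comp
      ((hv.continuous.comp RTq.continuous).sub (RTq.continuous.const_smul c))
  have hdense : ∀ z : ℂ, RTq z ∈ T → z ∈ closure Ω := fun z hz =>
    RT_dense T hconv z hz ((x₀.1 : ℂ) + (x₀.2 : ℂ) * Complex.I)
      (by rw [hsurj]; exact hx₀)
  -- edge conditions
  set τ : Fin 3 → ℂ := fun i => RTc (p (i + 1) - p i) with hτ
  have hτne : ∀ i, τ i ≠ 0 := by
    intro i h
    have h0 := RTc_eq_zero h
    have : p (i + 1) = p i := by
      have := sub_eq_zero.mp h0
      exact this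
    have hne3 : ∀ j : Fin 3, j + 1 ≠ j := by decide
    exact hp.injective.ne (hne3 i) this
  have hedge : ∀ i : Fin 3, ∀ x ∈ segment ℝ (p i) (p (i + 1)),
      (μ x * (τ i) ^ 2).im = 0 := by
    intro i
    obtain ⟨g, hg⟩ := hnormal i
    have hseg : ∀ t ∈ Icc (0 : ℝ) 1,
        p i + t • (p (i + 1) - p i) ∈ segment ℝ (p i) (p (i + 1)) := by
      intro t ht
      rw [segment_eq_image']
      exact mem_image_of_mem _ ht
    have hopen : ∀ t ∈ Ioo (0 : ℝ) 1,
        (μ (p i + t • (p (i + 1) - p i)) * (τ i) ^ 2).im = 0 := by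
      intro t ht
      have hx : p i + t • (p (i + 1) - p i) ∈ T :=
        hsegT i (hseg t ⟨ht.1.le, ht.2.le⟩)
      exact RT_edge_im v hvd c (p i) (p (i + 1) - p i) (nrm i) (hnrm i).1 (hnrm i).2 g
        (fun s hs => hg _ (hseg s hs)) t ht (by rw [hdiv _ hx]; exact hdc) (hcurl _ hx)
    have hcont2 : Continuous fun t : ℝ =>
        (μ (p i + t • (p (i + 1) - p i)) * (τ i) ^ 2).im :=
      Complex.continuous_im.comp
        ((hμcont.comp (continuous_const.add (continuous_id.smul continuous_const))).mul continuous_const)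
    have hIcc : ∀ t ∈ Icc (0 : ℝ) 1,
        (μ (p i + t • (p (i + 1) - p i)) * (τ i) ^ 2).im = 0 := by
      intro t ht
      have hcl : t ∈ closure (Ioo (0 : ℝ) 1) := by
        rw [closure_Ioo (by norm_num : (0 : ℝ) ≠ 1)]
        exact ht
      have heq : Set.EqOn (fun t : ℝ =>
          (μ (p i + t • (p (i + 1) - p i)) * (τ i) ^ 2).im) (fun _ => (0 : ℝ))
          (closure (Ioo (0 : ℝ) 1)) :=
        Set.EqOn.closure (fun s hs => hopen s hs) hcont2 continuous_const
      exact heq hcl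
    intro x hx
    rw [segment_eq_image'] at hx
    obtain ⟨t, ht, rfl⟩ := hx
    exact hIcc t ht
  -- open mapping dichotomy
  rcases hμana.is_constant_or_isOpen hΩconn with ⟨k, hk⟩ | hopenmap
  · -- μ constant on Ω, then on T, hence zero, hence f constant
    have hμT : ∀ x ∈ T, μ x = k := by
      intro x hx
      have hcl : closure Ω ⊆ {z : ℂ | μ (RTq z) = k} :=
        closure_minimal (fun z hzΩ => hk z hzΩ)
          (isClosed_eq (hμcont.comp RTq.continuous) continuous_const)
      have := hcl (hdense ((x.1 : ℂ) + (x.2 : ℂ) * Complex.I) (by rw [hsurj x]; exact hx))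
      rwa [mem_setOf_eq, hsurj x] at this
    have hk0 : k = 0 := by
      apply RT_const_zero p hp k
      intro i
      have h1 := hedge i (p i) (left_mem_segment ℝ _ _)
      rwa [hμT (p i) (hpT i)] at h1
    have hder0 : ∀ z ∈ Ω, HasDerivAt f 0 z := by
      intro z hz
      have := hder z (interior_subset hz)
      have h00 : μ (RTq z) = 0 := by rw [hk z hz]; exact hk0
      rwa [h00] at this
    obtain ⟨z₀, hz₀⟩ := hΩne
    have hconst : ∀ z ∈ Ω, f z = f z₀ := by
      intro z hz
      apply Convex.is_const_of_fderivWithin_eq_zero hΩconv hfdiff ?_ hz hz₀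
      intro y hy
      rw [fderivWithin_of_isOpen hΩopen hy, (hder0 y hy).hasFDerivAt.fderiv]
      ext w
      simp
    have hfT : ∀ z : ℂ, RTq z ∈ T → f z = f z₀ := by
      intro z hz
      exact closure_minimal hconst (isClosed_eq hfcont continuous_const) (hdense z hz)
    refine ⟨((f z₀).re, -(f z₀).im), c, ?_⟩
    intro x hx
    have hfx := hfT ((x.1 : ℂ) + (x.2 : ℂ) * Complex.I) (by rw [hsurj x]; exact hx)
    have hL : f ((x.1 : ℂ) + (x.2 : ℂ) * Complex.I)
        = ((v x - c • x).1 : ℂ) - ((v x - c • x).2 : ℝ) • Complex.I := by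
      rw [hf]
      unfold RTf
      rw [hsurj x]
      simp
    rw [hL] at hfx
    have hre := congrArg Complex.re hfx
    have him := congrArg Complex.im hfx
    simp only [Complex.sub_re, Complex.ofReal_re, Complex.smul_re, Complex.I_re,
      smul_eq_mul, mul_zero, sub_zero, Complex.sub_im, Complex.ofReal_im, Complex.smul_im,
      Complex.I_im, mul_one, zero_sub] at hre him
    have h1 : (v x).1 - c * x.1 = (f z₀).re := by
      have : (v x - c • x).1 = (v x).1 - c * x.1 := rfl
      rw [← this]; exact hre
    have h2 : (v x).2 - c * x.2 = -(f z₀).im := by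
      have : (v x - c • x).2 = (v x).2 - c * x.2 := rfl
      rw [← this]; linarith [him]
    ext
    · simp only [Prod.fst_add, Prod.smul_fst, smul_eq_mul]
      linarith
    · simp only [Prod.snd_add, Prod.smul_snd, smul_eq_mul]
      linarith
  · -- open mapping case: contradiction
    exfalso
    set U := (fun z => μ (RTq z)) '' Ω with hU
    have hUopen : IsOpen U := hopenmap Ω subset_rfl hΩopen
    have hUne : U.Nonempty := hΩne.image _
    set K := μ '' T with hK
    have hKcomp : IsCompact K := hTcomp.image hμcont
    have hUK : U ⊆ K := by
      rintro y ⟨z, hz, rfl⟩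
      exact ⟨RTq z, interior_subset hz, rfl⟩
    obtain ⟨C, hCK⟩ := isBounded_iff_forall_norm_le.mp hKcomp.isBounded
    obtain ⟨y₀, hy₀U, hy₀⟩ := RT_off_lines U hUopen hUne (fun i => (τ i) ^ 2)
      (fun i => pow_ne_zero 2 (hτne i))
    have hy₀ne : y₀ ≠ 0 := by
      intro h
      exact hy₀ 0 (by rw [h]; simp)
    obtain ⟨t, htpos, htfr⟩ := RT_ray_frontier U hUopen C (fun y hy => hCK y (hUK hy))
      y₀ hy₀U hy₀ne
    have hfrK : frontier U ⊆ K := fun y hy =>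
      closure_minimal hUK hKcomp.isClosed (frontier_subset_closure hy)
    obtain ⟨x, hxT, hxy⟩ := hfrK htfr
    have hxnotint : x ∉ interior T := by
      intro hxint
      have hmem : t • y₀ ∈ U := ⟨(x.1 : ℂ) + (x.2 : ℂ) * Complex.I,
        by simp only [hΩ, mem_preimage, hsurj x]; exact hxint,
        by show μ (RTq ((x.1 : ℂ) + (x.2 : ℂ) * Complex.I)) = t • y₀
           rw [hsurj x]; exact hxy⟩
      rw [hUopen.frontier_eq] at htfr
      exact htfr.2 hmem
    obtain ⟨i, hxseg⟩ := RT_boundary p hp x hxT hxnotint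
    have h0 := hedge i x hxseg
    rw [hxy] at h0
    have hsm : ((t • y₀) * (τ i) ^ 2).im = t * (y₀ * (τ i) ^ 2).im := by
      rw [smul_mul_assoc, Complex.smul_im]
      rfl
    rw [hsm] at h0
    exact hy₀ i ((mul_eq_zero.mp h0).resolve_left htpos.ne')
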